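/- arXiv:math/0102013 — 2 statements merged into one kernel-verified Lean document; each statement's English description precedes it below -/
import Mathlib

section
/- Let G be a group, T ⊆ H ⊆ G subgroups with the property that any two subgroups of H conjugate (in G) to T and contained in H are conjugate by an element of H (e.g. T a maximal torus of a compact Lie group and H a closed subgroup of maximal rank). Then the fixed point set of the left-multiplication action of T on G/H equals {xH : x⁻¹Tx ⊆ H}, and the map N_G(T) → G/H, y ↦ yH, induces a bijection N_G(T)/(N_G(T) ∩ H) ≅ {fixed points of T on G/H}. -/
/-!
A coset `xH` is fixed by `T` exactly when `x⁻¹Tx ⊆ H`. Every `y ∈ N_G(T)` gives such a coset since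
`y⁻¹Ty = T ⊆ H`, and conversely the conjugacy hypothesis moves any representative `x` of a fixed
coset to `xh ∈ N_G(T)`. Hence the fixed-point set is the orbit of the base coset `H` under
`N_G(T)`, and the orbit–stabilizer theorem identifies it with `N_G(T)/(N_G(T) ∩ H)`.
-/

open MulAction

section

variable {G : Type*} [Group G]

theorem QuotientGroup.mk_mem_fixedPoints_iff {T H : Subgroup G} {x : G} :
    (x : G ⧸ H) ∈ fixedPoints T (G ⧸ H) ↔ ∀ t ∈ T, x⁻¹ * t * x ∈ H := by
  refine ⟨fun hx t ht => ?_, fun hx t => ?_⟩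
  · have : ((t⁻¹ * x : G) : G ⧸ H) = x := hx ⟨t⁻¹, inv_mem ht⟩
    rwa [QuotientGroup.eq, mul_inv_rev, inv_inv] at this
  · change ((t * x : G) : G ⧸ H) = x
    rw [QuotientGroup.eq, mul_inv_rev]
    exact hx _ (inv_mem t.2)

theorem fixedPoints_quotient (T H : Subgroup G) :
    fixedPoints T (G ⧸ H) = {q | ∃ x : G, q = QuotientGroup.mk x ∧ ∀ t ∈ T, x⁻¹ * t * x ∈ H} := by
  ext q
  induction q using QuotientGroup.induction_on with
  | H x =>
    refine ⟨fun hx => ⟨x, rfl, QuotientGroup.mk_mem_fixedPoints_iff.mp hx⟩, ?_⟩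
    rintro ⟨y, hxy, hy⟩
    exact hxy ▸ QuotientGroup.mk_mem_fixedPoints_iff.mpr hy

theorem stabilizer_subgroup_quotient (K H : Subgroup G) :
    stabilizer K ((1 : G) : G ⧸ H) = H.subgroupOf K := by
  ext k
  change ((k * 1 : G) : G ⧸ H) = (1 : G) ↔ _
  rw [QuotientGroup.eq, Subgroup.mem_subgroupOf, mul_one, mul_one, inv_mem_iff]

theorem orbit_normalizer_eq_fixedPoints {T H : Subgroup G} (hTH : T ≤ H)
    (hconj : ∀ x : G, (∀ t ∈ T, x⁻¹ * t * x ∈ H) →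
      ∃ h ∈ H, ∀ g : G, g ∈ T ↔ (x * h)⁻¹ * g * (x * h) ∈ T) :
    orbit (Subgroup.normalizer (T : Set G)) ((1 : G) : G ⧸ H) = fixedPoints T (G ⧸ H) := by
  ext q
  constructor
  · rintro ⟨n, rfl⟩
    change ((n * 1 : G) : G ⧸ H) ∈ _
    rw [mul_one, QuotientGroup.mk_mem_fixedPoints_iff]
    exact fun t ht => hTH ((Subgroup.mem_normalizer_iff''.mp n.2 t).mp ht)
  · intro hq
    induction q using QuotientGroup.induction_on with
    | H x =>
      obtain ⟨h, hH, hxh⟩ := hconj x (QuotientGroup.mk_mem_fixedPoints_iff.mp hq)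
      refine ⟨⟨x * h, Subgroup.mem_normalizer_iff''.mpr hxh⟩, ?_⟩
      change ((x * h * 1 : G) : G ⧸ H) = x
      rw [mul_one, QuotientGroup.eq, mul_inv_rev, inv_mul_cancel_right]
      exact inv_mem hH

end

/-- Let `T ⊆ H ⊆ G` be subgroups such that any subgroup of the form
`x⁻¹Tx` contained in `H` is conjugate to `T` by an element of `H`
(the maximal-torus conjugacy hypothesis).  Then the fixed point set of the
left-multiplication action of `T` on `G/H` equals `{xH : x⁻¹Tx ⊆ H}`, and
`y ↦ yH` induces a bijection `N_G(T)/(N_G(T) ∩ H) ≅ {fixed points of T on G/H}`. -/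
theorem stmt_2 {G : Type*} [Group G] (T H : Subgroup G) (hTH : T ≤ H)
    (hconj : ∀ x : G, (∀ t ∈ T, x⁻¹ * t * x ∈ H) →
      ∃ h ∈ H, ∀ g : G, g ∈ T ↔ (x * h)⁻¹ * g * (x * h) ∈ T) :
    (MulAction.fixedPoints T (G ⧸ H) =
      {q : G ⧸ H | ∃ x : G, q = QuotientGroup.mk x ∧ ∀ t ∈ T, x⁻¹ * t * x ∈ H}) ∧
    Nonempty ((Subgroup.normalizer (T : Set G) ⧸ (Subgroup.normalizer (T : Set G) ⊓ H).subgroupOf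
        (Subgroup.normalizer (T : Set G))) ≃
      MulAction.fixedPoints T (G ⧸ H)) := by
  refine ⟨fixedPoints_quotient T H, ⟨?_⟩⟩
  rw [Subgroup.inf_subgroupOf_left, ← stabilizer_subgroup_quotient,
    ← orbit_normalizer_eq_fixedPoints hTH hconj]
  exact (orbitEquivQuotientStabilizer _ _).symm
end

section
/- Let u₁,…,u_n be pairwise distinct elements of a field and m ≥ 0. Then ∑_{i=1}^n u_i^{n−1+m}/∏_{j≠i}(u_i − u_j) = h_m(u₁,…,u_n), the complete homogeneous symmetric polynomial of degree m. -/
/-!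
Write `D_k(s) = ∑_{i ∈ s} v_i^k / ∏_{j ∈ s, j ≠ i} (v_i - v_j)` (the divided difference of `X^k`
at the nodes `v_i`). Removing a node `a ∈ s`, the identity
`v_i^{k+1} = v_a v_i^k + (v_i - v_a) v_i^k` gives `D_{k+1}(s) = v_a D_k(s) + D_k(s \ {a})`, which is
also the recurrence `h_{m+1}(s) = v_a h_m(s) + h_{m+1}(s \ {a})` of the complete homogeneous
symmetric polynomials. The two families therefore agree once they agree at `m = 0`, and
`D_{|s|-1}(s) = 1` is the leading coefficient of the Lagrange interpolant of `X^{|s|-1}`.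
-/

open Finset

section

variable {ι F : Type*} [DecidableEq ι] [Field F]

def divDiffPow (s : Finset ι) (v : ι → F) (k : ℕ) : F :=
  ∑ i ∈ s, v i ^ k / ∏ j ∈ s.erase i, (v i - v j)

def hsymmOn (s : Finset ι) (v : ι → F) (m : ℕ) : F :=
  ∑ t ∈ s.sym m, ((t : Multiset ι).map v).prod

lemma hsymmOn_zero (s : Finset ι) (v : ι → F) : hsymmOn s v 0 = 1 := by
  simp only [hsymmOn, sym_zero, sum_singleton]
  rfl

lemma hsymmOn_empty_succ (v : ι → F) (m : ℕ) : hsymmOn ∅ v (m + 1) = 0 := by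
  simp [hsymmOn]

lemma hsymmOn_insert {a : ι} {s : Finset ι} (ha : a ∉ s) (v : ι → F) (m : ℕ) :
    hsymmOn (insert a s) v m = ∑ i : Fin (m + 1), v a ^ (i : ℕ) * hsymmOn s v (m - i) := by
  rw [hsymmOn, ← sum_coe_sort ((insert a s).sym m), ← (symInsertEquiv ha).symm.sum_comp,
    Fintype.sum_sigma]
  refine sum_congr rfl fun i _ => ?_
  rw [hsymmOn, ← sum_coe_sort (s.sym _), mul_sum]
  refine sum_congr rfl fun t _ => ?_
  simp [Sym.coe_fill, Sym.coe_replicate, mul_comm]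

lemma hsymmOn_insert_succ {a : ι} {s : Finset ι} (ha : a ∉ s) (v : ι → F) (m : ℕ) :
    hsymmOn (insert a s) v (m + 1) = v a * hsymmOn (insert a s) v m + hsymmOn s v (m + 1) := by
  rw [hsymmOn_insert ha, hsymmOn_insert ha, Fin.sum_univ_succ, mul_sum, add_comm]
  simp [pow_succ', mul_assoc]

lemma divDiffPow_empty (v : ι → F) (k : ℕ) : divDiffPow ∅ v k = 0 := sum_empty

lemma divDiffPow_insert_succ {a : ι} {s : Finset ι} (ha : a ∉ s) {v : ι → F}
    (hv : ∀ i ∈ s, v i ≠ v a) (k : ℕ) :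
    divDiffPow (insert a s) v (k + 1) = v a * divDiffPow (insert a s) v k + divDiffPow s v k := by
  have hterm : ∀ i ∈ s, v i ^ (k + 1) / ∏ j ∈ (insert a s).erase i, (v i - v j)
      = v a * (v i ^ k / ∏ j ∈ (insert a s).erase i, (v i - v j))
        + v i ^ k / ∏ j ∈ s.erase i, (v i - v j) := by
    intro i hi
    have hia : v i - v a ≠ 0 := sub_ne_zero.mpr (hv i hi)
    rw [erase_insert_of_ne (ne_of_mem_of_not_mem hi ha).symm, prod_insert (by simp [ha]),
      show v i ^ (k + 1) = v a * v i ^ k + (v i - v a) * v i ^ k by ring, add_div, mul_div_assoc,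
      mul_div_mul_left _ _ hia]
  rw [divDiffPow, sum_insert ha, sum_congr rfl hterm, sum_add_distrib, ← mul_sum, divDiffPow,
    divDiffPow, sum_insert ha]
  ring

lemma divDiffPow_eq_one {s : Finset ι} {v : ι → F} (hv : Set.InjOn v s) {n : ℕ}
    (hs : #s = n + 1) : divDiffPow s v n = 1 := by
  have hdeg : (Polynomial.X ^ n : Polynomial F).degree < #s := by
    rw [Polynomial.degree_X_pow, hs]
    exact_mod_cast n.lt_succ_self
  simpa [hs, divDiffPow] using (Lagrange.coeff_eq_sum hv hdeg).symm

lemma divDiffPow_eq_hsymmOn_of_erase {s : Finset ι} {v : ι → F} (hv : Set.InjOn v s) {n : ℕ}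
    (hs : #s = n + 1) {a : ι} (ha : a ∈ s)
    (herase : ∀ m, divDiffPow (s.erase a) v (n + m) = hsymmOn (s.erase a) v (m + 1)) (m : ℕ) :
    divDiffPow s v (n + m) = hsymmOn s v m := by
  have hva : ∀ i ∈ s.erase a, v i ≠ v a := fun i hi h =>
    ne_of_mem_erase hi (hv (mem_of_mem_erase hi) ha h)
  induction m with
  | zero => rw [hsymmOn_zero, add_zero, divDiffPow_eq_one hv hs]
  | succ m ih =>
    rw [← insert_erase ha, ← add_assoc, divDiffPow_insert_succ (notMem_erase a s) hva,
      hsymmOn_insert_succ (notMem_erase a s), insert_erase ha, ih, herase]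

theorem divDiffPow_eq_hsymmOn {s : Finset ι} {v : ι → F} (hv : Set.InjOn v s) {n : ℕ}
    (hs : #s = n + 1) (m : ℕ) : divDiffPow s v (n + m) = hsymmOn s v m := by
  induction n generalizing s m with
  | zero =>
    obtain ⟨a, rfl⟩ := card_eq_one.mp hs
    refine divDiffPow_eq_hsymmOn_of_erase hv hs (mem_singleton_self a) (fun m => ?_) m
    simp [divDiffPow_empty, hsymmOn_empty_succ]
  | succ n ih =>
    obtain ⟨a, ha⟩ : s.Nonempty := card_pos.mp (by omega)
    refine divDiffPow_eq_hsymmOn_of_erase hv hs ha (fun m => ?_) m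
    rw [add_right_comm]
    exact ih (hv.mono (erase_subset a s)) (by rw [card_erase_of_mem ha, hs]; rfl) (m + 1)

end

/-- for pairwise distinct `u₁, …, u_n` in a field and `m ≥ 0`,
`∑ᵢ uᵢ^{n−1+m}/∏_{j≠i}(uᵢ − uⱼ) = h_m(u₁, …, u_n)`, the complete homogeneous
symmetric polynomial of degree `m` evaluated at `u` (expressed as the sum over
all multisets of size `m` of indices of the corresponding monomial). -/
theorem stmt_9 {F : Type*} [Field F] (n : ℕ) (hn : 1 ≤ n) (u : Fin n → F)
    (hu : Function.Injective u) (m : ℕ) :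
    ∑ i : Fin n, u i ^ (n - 1 + m) / ∏ j ∈ Finset.univ.erase i, (u i - u j)
      = ∑ s : Sym (Fin n) m, ((s : Multiset (Fin n)).map u).prod := by
  obtain ⟨n, rfl⟩ := Nat.exists_eq_add_of_le' hn
  rw [Nat.add_sub_cancel, ← sym_univ]
  exact divDiffPow_eq_hsymmOn hu.injOn (card_fin _) m
end
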